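/- arXiv:1905.02006 — 8 statements merged into one kernel-verified Lean document; each statement's English description precedes it below -/
import Mathlib

section
/- Let n ≥ 1, m ≥ 1 be integers, let f : ℝⁿ → ℝ be a smooth positive function and let h : ℝⁿ × ℝᵐ → ℝ be smooth. Fix an index j ∈ {1,…,m}. Suppose that ∂h/∂y_j(x,y) ≠ 0 for every (x,y) ∈ ℝⁿ × ℝᵐ and that for every i ∈ {1,…,n} and every (x,y), ∂²h/∂x_i∂y_j(x,y) = (∂f/∂x_i(x)/f(x)) · ∂h/∂y_j(x,y). Then there exists a function G : ℝᵐ → ℝ such that ∂h/∂y_j(x,y) = f(x)·G(y) for all (x,y) ∈ ℝⁿ × ℝᵐ. -/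
lemma clm_zero_of_basis {n : ℕ} (L : (Fin n → ℝ) →L[ℝ] ℝ)
    (h : ∀ i, L (Pi.single i 1) = 0) : L = 0 := by
  ext v
  have hv : v = ∑ i, v i • (Pi.single i (1:ℝ) : Fin n → ℝ) := by
    rw [← Finset.univ_sum_single v]
    congr 1; ext i k
    simp [Pi.single_apply, smul_ite]
  rw [hv]
  simp [h]

/-- Separation of variables: if the mixed partial `∂²h/∂x_i∂y_j`
equals `(∂f/∂x_i / f) · ∂h/∂y_j` for all `i`, and `∂h/∂y_j` never vanishes, then
`∂h/∂y_j(x,y) = f(x)·G(y)` for some function `G` of the fiber variables only. -/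
theorem stmt0 (n m : ℕ) (hn : 1 ≤ n) (hm : 1 ≤ m)
    (f : (Fin n → ℝ) → ℝ) (hf : ContDiff ℝ (⊤ : ℕ∞) f) (hfpos : ∀ x, 0 < f x)
    (h : ((Fin n → ℝ) × (Fin m → ℝ)) → ℝ) (hh : ContDiff ℝ (⊤ : ℕ∞) h)
    (j : Fin m)
    (hne : ∀ (x : Fin n → ℝ) (y : Fin m → ℝ),
      fderiv ℝ h (x, y) (0, Pi.single j 1) ≠ 0)
    (hmix : ∀ (i : Fin n) (x : Fin n → ℝ) (y : Fin m → ℝ),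
      fderiv ℝ (fun p => fderiv ℝ h p (0, Pi.single j 1)) (x, y) (Pi.single i 1, 0)
        = (fderiv ℝ f x (Pi.single i 1) / f x) * fderiv ℝ h (x, y) (0, Pi.single j 1)) :
    ∃ G : (Fin m → ℝ) → ℝ, ∀ (x : Fin n → ℝ) (y : Fin m → ℝ),
      fderiv ℝ h (x, y) (0, Pi.single j 1) = f x * G y := by
  set U : ((Fin n → ℝ) × (Fin m → ℝ)) → ℝ :=
    fun p => fderiv ℝ h p (0, Pi.single j 1) with hU_def
  have hU : ContDiff ℝ (⊤ : ℕ∞) U :=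
    (ContDiff.fderiv_right hh (by simp)).clm_apply contDiff_const
  refine ⟨fun y => U (0, y) * (f 0)⁻¹, fun x y => ?_⟩
  have key : U (x, y) * (f x)⁻¹ = U (0, y) * (f 0)⁻¹ := by
    have hdiff : Differentiable ℝ (fun x => U (x, y) * (f x)⁻¹) := by
      intro x
      have h1 : DifferentiableAt ℝ (fun x => U (x, y)) x := by
        have := ((hU.differentiable (by simp) (x, y)).comp x
          (((differentiableAt_id : DifferentiableAt ℝ id x).prodMk (differentiableAt_const y))))
        exact this
      exact h1.mul ((hf.differentiable (by simp) x).inv (hfpos x).ne')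
    have hzero : ∀ x, fderiv ℝ (fun x => U (x, y) * (f x)⁻¹) x = 0 := by
      intro x
      have hfne : f x ≠ 0 := (hfpos x).ne'
      have hUy : HasFDerivAt (fun x => U (x, y))
          ((fderiv ℝ U (x, y)).comp (ContinuousLinearMap.inl ℝ _ _)) x := by
        have := ((hU.differentiable (by simp) (x, y)).hasFDerivAt).comp x
          (hasFDerivAt_prodMk_left (𝕜 := ℝ) x y)
        exact this
      have hfx : HasFDerivAt f (fderiv ℝ f x) x :=
        (hf.differentiable (by simp) x).hasFDerivAt
      have hinv : HasFDerivAt (fun x => (f x)⁻¹)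
          ((-ContinuousLinearMap.mulLeftRight ℝ ℝ (f x)⁻¹ (f x)⁻¹).comp
            (fderiv ℝ f x)) x :=
        (hasFDerivAt_inv' hfne).comp x hfx
      have hg : HasFDerivAt (fun x => U (x, y) * (f x)⁻¹) _ x := hUy.mul hinv
      rw [hg.fderiv]
      apply clm_zero_of_basis
      intro i
      have hm' := hmix i x y
      simp only [ContinuousLinearMap.add_apply, ContinuousLinearMap.smul_apply,
        ContinuousLinearMap.comp_apply, ContinuousLinearMap.inl_apply,
        ContinuousLinearMap.neg_apply, ContinuousLinearMap.mulLeftRight_apply,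
        smul_eq_mul, ContinuousLinearMap.zero_apply]
      rw [show (fderiv ℝ U (x, y)) (Pi.single i 1, 0) =
        (fderiv ℝ f x (Pi.single i 1) / f x) * U (x, y) from hm']
      field_simp
      ring
    exact is_const_of_fderiv_eq_zero hdiff hzero x 0
  have hfne : f x ≠ 0 := (hfpos x).ne'
  show U (x, y) = f x * (U (0, y) * (f 0)⁻¹)
  rw [← key]
  field_simp
end

section
/- Let n ≥ 3 and m ≥ 1 be integers, r > 0, ρ, λ_F ∈ ℝ, let ε_1,…,ε_n ∈ {−1,1} and α = (α_1,…,α_n) ∈ ℝⁿ satisfy Σ_{i=1}^n ε_i α_i² = ε₀ with ε₀ ∈ {−1,1}. Let F, Φ, H : ℝ → ℝ be smooth positive functions and define f, φ, h : ℝⁿ → ℝ by f(x) = F(Σ_i α_i x_i), φ(x) = Φ(Σ_i α_i x_i), h(x) = H(Σ_i α_i x_i). Then the following three families of equations hold at every x ∈ ℝⁿ: (i) for all i ≠ j, (n−2)fh·φ_{x_ix_j} − rfφ·h_{x_ix_j} − mhφ·f_{x_ix_j} − mh·φ_{x_i}f_{x_j} − mh·φ_{x_j}f_{x_i} − rf·φ_{x_i}h_{x_j}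 − rf·φ_{x_j}h_{x_i} = 0; (ii) for all i, φ·[(n−2)fh·φ_{x_ix_i} − rfφ·h_{x_ix_i} − mhφ·f_{x_ix_i} − 2mh·φ_{x_i}f_{x_i} − 2rf·φ_{x_i}h_{x_i}] + ε_i Σ_{k=1}^n ε_k [fhφ·φ_{x_kx_k} − (n−1)fh(φ_{x_k})² + mhφ·φ_{x_k}f_{x_k} + rfφ·φ_{x_k}h_{x_k}] = ε_i ρ f h; (iii) Σ_{k=1}^n ε_k [−fhφ²·f_{x_kx_k} + (n−2)fhφ·φ_{x_k}f_{x_k} − (m−1)hφ²(f_{x_k})² − rfφ²·f_{x_k}h_{x_k}] = h(ρf² − λ_F); if and only if for every ξ ∈ ℝ: (I) (n−2)FHΦ'' − rFΦH'' − mHΦF'' − 2mHΦ'F' − 2rFΦ'H' = 0; (II) ε₀[FHΦΦ'' − (n−1)FH(Φ')² + mHΦΦ'F' + rFΦΦ'H'] = ρFH; (III) ε₀[−FHΦ²F'' + (n−2)FHΦΦ'F' − (m−1)HΦ²(F')² − rFΦ²F'H'] = H(ρF² − λ_F). -/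
/-- First partial derivative of `u : ℝⁿ → ℝ` in the `i`-th coordinate direction. -/
noncomputable def pd {n : ℕ} (u : (Fin n → ℝ) → ℝ) (i : Fin n) (x : Fin n → ℝ) : ℝ :=
  fderiv ℝ u x (Pi.single i 1)

/-- Second partial derivative `u_{x_i x_j}`. -/
noncomputable def pd2 {n : ℕ} (u : (Fin n → ℝ) → ℝ) (i j : Fin n) (x : Fin n → ℝ) : ℝ :=
  pd (fun y => pd u j y) i x

lemma pd_comp {n : ℕ} (α : Fin n → ℝ) (G : ℝ → ℝ) (hG : Differentiable ℝ G) (i : Fin n)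
    (x : Fin n → ℝ) :
    pd (fun y => G (∑ k, α k * y k)) i x = α i * deriv G (∑ k, α k * x k) := by
  classical
  set L : (Fin n → ℝ) →L[ℝ] ℝ := ∑ k, α k • (ContinuousLinearMap.proj k) with hL
  have hLapp : ∀ y : Fin n → ℝ, L y = ∑ k, α k * y k := by
    intro y
    simp [hL, ContinuousLinearMap.sum_apply]
  have hfd : HasFDerivAt (fun y : Fin n → ℝ => G (∑ k, α k * y k))
      (deriv G (∑ k, α k * x k) • L) x := by
    have h1 : HasFDerivAt (fun y : Fin n → ℝ => ∑ k, α k * y k) L x := by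
      simpa [funext hLapp] using L.hasFDerivAt (x := x)
    have h2 : HasDerivAt G (deriv G (∑ k, α k * x k)) (∑ k, α k * x k) :=
      (hG _).hasDerivAt
    exact h2.comp_hasFDerivAt x h1
  rw [pd, hfd.fderiv]
  have : L (Pi.single i 1) = α i := by
    rw [hLapp]
    simp [Pi.single_apply]
  simp [this, mul_comm]

lemma pd2_comp {n : ℕ} (α : Fin n → ℝ) (G : ℝ → ℝ) (hG : ContDiff ℝ (⊤ : ℕ∞) G) (i j : Fin n)
    (x : Fin n → ℝ) :
    pd2 (fun y => G (∑ k, α k * y k)) i j x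
      = α i * α j * deriv (deriv G) (∑ k, α k * x k) := by
  have hGi : ContDiff ℝ (↑(⊤ : ℕ∞)) G := hG.of_le (by simp)
  have hG' : ContDiff ℝ (↑(⊤ : ℕ∞)) (deriv G) := (contDiff_infty_iff_deriv.mp hGi).2
  have hdG : Differentiable ℝ (deriv G) := hG'.differentiable (by simp)
  have h1 : (fun y => pd (fun z : Fin n → ℝ => G (∑ k, α k * z k)) j y)
      = fun y => (fun t => α j * deriv G t) (∑ k, α k * y k) :=
    funext fun y => pd_comp α G (hGi.differentiable (by simp)) j y
  rw [pd2, h1, pd_comp α (fun t => α j * deriv G t) ((differentiable_const _).mul hdG) i x,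
    deriv_const_mul _ (hdG _)]
  ring

/-- ODE expression (I). -/
noncomputable def QA (n m : ℕ) (r : ℝ) (F Φ H : ℝ → ℝ) (ξ : ℝ) : ℝ :=
  (n - 2 : ℝ) * F ξ * H ξ * deriv (deriv Φ) ξ - r * F ξ * Φ ξ * deriv (deriv H) ξ
    - m * H ξ * Φ ξ * deriv (deriv F) ξ - 2 * m * H ξ * deriv Φ ξ * deriv F ξ
    - 2 * r * F ξ * deriv Φ ξ * deriv H ξ

/-- ODE expression (II). -/
noncomputable def QB (n m : ℕ) (r : ℝ) (F Φ H : ℝ → ℝ) (ξ : ℝ) : ℝ :=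
  F ξ * H ξ * Φ ξ * deriv (deriv Φ) ξ - (n - 1 : ℝ) * F ξ * H ξ * (deriv Φ ξ) ^ 2
    + m * H ξ * Φ ξ * deriv Φ ξ * deriv F ξ + r * F ξ * Φ ξ * deriv Φ ξ * deriv H ξ

/-- ODE expression (III). -/
noncomputable def QC (n m : ℕ) (r : ℝ) (F Φ H : ℝ → ℝ) (ξ : ℝ) : ℝ :=
  -(F ξ) * H ξ * (Φ ξ) ^ 2 * deriv (deriv F) ξ
    + (n - 2 : ℝ) * F ξ * H ξ * Φ ξ * deriv Φ ξ * deriv F ξ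
    - (m - 1 : ℝ) * H ξ * (Φ ξ) ^ 2 * (deriv F ξ) ^ 2
    - r * F ξ * (Φ ξ) ^ 2 * deriv F ξ * deriv H ξ

/-- For translation-invariant data `f = F∘ξ`, `φ = Φ∘ξ`, `h = H∘ξ`
with `ξ(x) = Σ αᵢ xᵢ` and `Σ εᵢ αᵢ² = ε₀ = ±1`, the quasi-Einstein PDE system holds at
every point iff the corresponding ODE system holds for every `ξ ∈ ℝ`. -/
theorem stmt1 (n m : ℕ) (hn : 3 ≤ n) (hm : 1 ≤ m) (r ρ lamF : ℝ) (hr : 0 < r)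
    (ε : Fin n → ℝ) (hε : ∀ i, ε i = 1 ∨ ε i = -1)
    (α : Fin n → ℝ) (ε₀ : ℝ) (hε₀ : ε₀ = 1 ∨ ε₀ = -1)
    (hsum : ∑ i, ε i * (α i) ^ 2 = ε₀)
    (F Φ H : ℝ → ℝ)
    (hF : ContDiff ℝ (⊤ : ℕ∞) F) (hΦ : ContDiff ℝ (⊤ : ℕ∞) Φ) (hH : ContDiff ℝ (⊤ : ℕ∞) H)
    (hFpos : ∀ t, 0 < F t) (hΦpos : ∀ t, 0 < Φ t) (hHpos : ∀ t, 0 < H t)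
    (f φ h : (Fin n → ℝ) → ℝ)
    (hfdef : ∀ x, f x = F (∑ i, α i * x i))
    (hφdef : ∀ x, φ x = Φ (∑ i, α i * x i))
    (hhdef : ∀ x, h x = H (∑ i, α i * x i)) :
    ((∀ x : Fin n → ℝ, ∀ i j : Fin n, i ≠ j →
        (n - 2 : ℝ) * f x * h x * pd2 φ i j x - r * f x * φ x * pd2 h i j x
          - m * h x * φ x * pd2 f i j x - m * h x * pd φ i x * pd f j x
          - m * h x * pd φ j x * pd f i x - r * f x * pd φ i x * pd h j x
          - r * f x * pd φ j x * pd h i x = 0) ∧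
      (∀ x : Fin n → ℝ, ∀ i : Fin n,
        φ x * ((n - 2 : ℝ) * f x * h x * pd2 φ i i x - r * f x * φ x * pd2 h i i x
          - m * h x * φ x * pd2 f i i x - 2 * m * h x * pd φ i x * pd f i x
          - 2 * r * f x * pd φ i x * pd h i x)
        + ε i * ∑ k, ε k * (f x * h x * φ x * pd2 φ k k x
            - (n - 1 : ℝ) * f x * h x * (pd φ k x) ^ 2
            + m * h x * φ x * pd φ k x * pd f k x
            + r * f x * φ x * pd φ k x * pd h k x)
        = ε i * ρ * f x * h x) ∧
      (∀ x : Fin n → ℝ,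
        ∑ k, ε k * (-(f x) * h x * (φ x) ^ 2 * pd2 f k k x
            + (n - 2 : ℝ) * f x * h x * φ x * pd φ k x * pd f k x
            - (m - 1 : ℝ) * h x * (φ x) ^ 2 * (pd f k x) ^ 2
            - r * f x * (φ x) ^ 2 * pd f k x * pd h k x)
        = h x * (ρ * (f x) ^ 2 - lamF)))
    ↔
    ((∀ ξ : ℝ,
        (n - 2 : ℝ) * F ξ * H ξ * deriv (deriv Φ) ξ - r * F ξ * Φ ξ * deriv (deriv H) ξ
          - m * H ξ * Φ ξ * deriv (deriv F) ξ - 2 * m * H ξ * deriv Φ ξ * deriv F ξ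
          - 2 * r * F ξ * deriv Φ ξ * deriv H ξ = 0) ∧
      (∀ ξ : ℝ,
        ε₀ * (F ξ * H ξ * Φ ξ * deriv (deriv Φ) ξ - (n - 1 : ℝ) * F ξ * H ξ * (deriv Φ ξ) ^ 2
          + m * H ξ * Φ ξ * deriv Φ ξ * deriv F ξ + r * F ξ * Φ ξ * deriv Φ ξ * deriv H ξ)
        = ρ * F ξ * H ξ) ∧
      (∀ ξ : ℝ,
        ε₀ * (-(F ξ) * H ξ * (Φ ξ) ^ 2 * deriv (deriv F) ξ
          + (n - 2 : ℝ) * F ξ * H ξ * Φ ξ * deriv Φ ξ * deriv F ξ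
          - (m - 1 : ℝ) * H ξ * (Φ ξ) ^ 2 * (deriv F ξ) ^ 2
          - r * F ξ * (Φ ξ) ^ 2 * deriv F ξ * deriv H ξ)
        = H ξ * (ρ * (F ξ) ^ 2 - lamF))) := by
  classical
  have hεne : ∀ i, ε i ≠ 0 := fun i => by rcases hε i with hh | hh <;> rw [hh] <;> norm_num
  have hε₀ne : ε₀ ≠ 0 := by rcases hε₀ with hh | hh <;> rw [hh] <;> norm_num
  have hαne : ∃ i, α i ≠ 0 := by
    by_contra hc
    push_neg at hc
    rw [Finset.sum_eq_zero (fun i _ => by rw [hc i]; ring)] at hsum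
    exact hε₀ne hsum.symm
  obtain ⟨i₀, hi₀⟩ := hαne
  haveI : Nontrivial (Fin n) := Fin.nontrivial_iff_two_le.mpr (by omega)
  have hsurj : ∀ ξ : ℝ, ∃ x : Fin n → ℝ, ∑ k, α k * x k = ξ := by
    intro ξ
    refine ⟨Pi.single i₀ (ξ / α i₀), ?_⟩
    rw [Finset.sum_eq_single i₀]
    · rw [Pi.single_eq_same]; field_simp
    · intro b _ hb; rw [Pi.single_eq_of_ne hb]; ring
    · intro habs; exact absurd (Finset.mem_univ i₀) habs
  have hFd : Differentiable ℝ F := hF.differentiable (by simp)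
  have hΦd : Differentiable ℝ Φ := hΦ.differentiable (by simp)
  have hHd : Differentiable ℝ H := hH.differentiable (by simp)
  have hfL : f = fun y => F (∑ k, α k * y k) := funext hfdef
  have hφL : φ = fun y => Φ (∑ k, α k * y k) := funext hφdef
  have hhL : h = fun y => H (∑ k, α k * y k) := funext hhdef
  have hpdf : ∀ (i : Fin n) x, pd f i x = α i * deriv F (∑ k, α k * x k) := by
    intro i x; rw [hfL]; exact pd_comp α F hFd i x
  have hpdφ : ∀ (i : Fin n) x, pd φ i x = α i * deriv Φ (∑ k, α k * x k) := by
    intro i x; rw [hφL]; exact pd_comp α Φ hΦd i x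
  have hpdh : ∀ (i : Fin n) x, pd h i x = α i * deriv H (∑ k, α k * x k) := by
    intro i x; rw [hhL]; exact pd_comp α H hHd i x
  have hpd2f : ∀ (i j : Fin n) x, pd2 f i j x = α i * α j * deriv (deriv F) (∑ k, α k * x k) := by
    intro i j x; rw [hfL]; exact pd2_comp α F hF i j x
  have hpd2φ : ∀ (i j : Fin n) x, pd2 φ i j x = α i * α j * deriv (deriv Φ) (∑ k, α k * x k) := by
    intro i j x; rw [hφL]; exact pd2_comp α Φ hΦ i j x
  have hpd2h : ∀ (i j : Fin n) x, pd2 h i j x = α i * α j * deriv (deriv H) (∑ k, α k * x k) := by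
    intro i j x; rw [hhL]; exact pd2_comp α H hH i j x
  have key1 : ∀ (x : Fin n → ℝ) (i j : Fin n),
      (n - 2 : ℝ) * f x * h x * pd2 φ i j x - r * f x * φ x * pd2 h i j x
        - m * h x * φ x * pd2 f i j x - m * h x * pd φ i x * pd f j x
        - m * h x * pd φ j x * pd f i x - r * f x * pd φ i x * pd h j x
        - r * f x * pd φ j x * pd h i x
      = α i * α j * QA n m r F Φ H (∑ k, α k * x k) := by
    intro x i j
    simp only [hfdef, hφdef, hhdef, hpdf, hpdφ, hpdh, hpd2f, hpd2φ, hpd2h, QA]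
    ring
  have key2 : ∀ (x : Fin n → ℝ) (i : Fin n),
      φ x * ((n - 2 : ℝ) * f x * h x * pd2 φ i i x - r * f x * φ x * pd2 h i i x
        - m * h x * φ x * pd2 f i i x - 2 * m * h x * pd φ i x * pd f i x
        - 2 * r * f x * pd φ i x * pd h i x)
      + ε i * ∑ k, ε k * (f x * h x * φ x * pd2 φ k k x
          - (n - 1 : ℝ) * f x * h x * (pd φ k x) ^ 2
          + m * h x * φ x * pd φ k x * pd f k x
          + r * f x * φ x * pd φ k x * pd h k x)
      = Φ (∑ k, α k * x k) * (α i) ^ 2 * QA n m r F Φ H (∑ k, α k * x k)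
        + ε i * (ε₀ * QB n m r F Φ H (∑ k, α k * x k)) := by
    intro x i
    have hs : (∑ k, ε k * (f x * h x * φ x * pd2 φ k k x
          - (n - 1 : ℝ) * f x * h x * (pd φ k x) ^ 2
          + m * h x * φ x * pd φ k x * pd f k x
          + r * f x * φ x * pd φ k x * pd h k x))
        = ε₀ * QB n m r F Φ H (∑ k, α k * x k) := by
      rw [← hsum, Finset.sum_mul]
      refine Finset.sum_congr rfl fun k _ => ?_
      simp only [hfdef, hφdef, hhdef, hpdφ, hpdf, hpdh, hpd2φ, QB]
      ring
    rw [hs]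
    simp only [hfdef, hφdef, hhdef, hpdφ, hpdf, hpdh, hpd2φ, hpd2f, hpd2h, QA]
    ring
  have key3 : ∀ x : Fin n → ℝ,
      (∑ k, ε k * (-(f x) * h x * (φ x) ^ 2 * pd2 f k k x
          + (n - 2 : ℝ) * f x * h x * φ x * pd φ k x * pd f k x
          - (m - 1 : ℝ) * h x * (φ x) ^ 2 * (pd f k x) ^ 2
          - r * f x * (φ x) ^ 2 * pd f k x * pd h k x))
      = ε₀ * QC n m r F Φ H (∑ k, α k * x k) := by
    intro x
    rw [← hsum, Finset.sum_mul]
    refine Finset.sum_congr rfl fun k _ => ?_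
    simp only [hfdef, hφdef, hhdef, hpdφ, hpdf, hpdh, hpd2f, QC]
    ring
  constructor
  · rintro ⟨h1, h2, h3⟩
    have hI : ∀ ξ : ℝ, QA n m r F Φ H ξ = 0 := by
      intro ξ
      obtain ⟨x, hx⟩ := hsurj ξ
      rw [← hx]
      by_cases hall : ∀ k, k ≠ i₀ → α k = 0
      · obtain ⟨j, hj⟩ := exists_ne i₀
        have e2j := h2 x j
        rw [key2 x j, hall j hj] at e2j
        have e2j' : ε j * (ε₀ * QB n m r F Φ H (∑ k, α k * x k))
            = ε j * (ρ * f x * h x) := by linear_combination e2j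
        have hB := mul_left_cancel₀ (hεne j) e2j'
        have e2i := h2 x i₀
        rw [key2 x i₀] at e2i
        have hz : Φ (∑ k, α k * x k) * (α i₀) ^ 2 * QA n m r F Φ H (∑ k, α k * x k) = 0 := by
          linear_combination e2i - ε i₀ * hB
        have hne : Φ (∑ k, α k * x k) * (α i₀) ^ 2 ≠ 0 :=
          mul_ne_zero (ne_of_gt (hΦpos _)) (pow_ne_zero 2 hi₀)
        exact (mul_eq_zero.mp hz).resolve_left hne
      · push_neg at hall
        obtain ⟨k, hk, hαk⟩ := hall
        have e1 := h1 x k i₀ hk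
        rw [key1 x k i₀] at e1
        exact (mul_eq_zero.mp e1).resolve_left (mul_ne_zero hαk hi₀)
    have hII : ∀ ξ : ℝ, ε₀ * QB n m r F Φ H ξ = ρ * F ξ * H ξ := by
      intro ξ
      obtain ⟨x, hx⟩ := hsurj ξ
      have e2 := h2 x i₀
      rw [key2 x i₀, hfdef x, hhdef x, hx] at e2
      have e2' : ε i₀ * (ε₀ * QB n m r F Φ H ξ) = ε i₀ * (ρ * F ξ * H ξ) := by
        linear_combination e2 - (Φ ξ * (α i₀) ^ 2) * hI ξ
      exact mul_left_cancel₀ (hεne i₀) e2'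
    have hIII : ∀ ξ : ℝ, ε₀ * QC n m r F Φ H ξ = H ξ * (ρ * (F ξ) ^ 2 - lamF) := by
      intro ξ
      obtain ⟨x, hx⟩ := hsurj ξ
      have e3 := h3 x
      rw [key3 x, hfdef x, hhdef x, hx] at e3
      exact e3
    exact ⟨fun ξ => by simpa only [QA] using hI ξ,
      fun ξ => by simpa only [QB] using hII ξ,
      fun ξ => by simpa only [QC] using hIII ξ⟩
  · rintro ⟨hI, hII, hIII⟩
    have hI' : ∀ ξ, QA n m r F Φ H ξ = 0 := fun ξ => by simpa only [QA] using hI ξ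
    have hII' : ∀ ξ, ε₀ * QB n m r F Φ H ξ = ρ * F ξ * H ξ := fun ξ => by
      simpa only [QB] using hII ξ
    have hIII' : ∀ ξ, ε₀ * QC n m r F Φ H ξ = H ξ * (ρ * (F ξ) ^ 2 - lamF) := fun ξ => by
      simpa only [QC] using hIII ξ
    refine ⟨fun x i j hij => ?_, fun x i => ?_, fun x => ?_⟩
    · rw [key1 x i j, hI' _, mul_zero]
    · rw [key2 x i, hfdef x, hhdef x, hI' _, hII' _]
      ring
    · rw [key3 x, hfdef x, hhdef x]
      exact hIII' _
end

section
/- Let n ≥ 3 and m ≥ 1 be integers and r > 0. Let I ⊆ ℝ be an open interval and let f, φ, h : I → ℝ be positive twice differentiable functions with f'(ξ) ≠ 0 and φ'(ξ) ≠ 0 for all ξ ∈ I, satisfying on I the system: (n−2)fhφ'' − rfφh'' − mhφf'' − 2mhφ'f' − 2rfφ'h' = 0; fhφφ'' − (n−1)fh(φ')² + mhφφ'f' + rfφφ'h' = 0; and −fhφ²f'' + (n−2)fhφφ'f' − (m−1)hφ²(f')² − rfφ²f'h' = 0. Then there exists a nonzero constant k ∈ ℝ such that φ'(ξ)f(ξ)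 = k·φ(ξ)f'(ξ) for all ξ ∈ I. -/
/-! Adding `φ f'` times the second equation to `φ'` times the third one leaves
`h φ` times the Wronskian `(φ' f)' (φ f') - (φ' f) (φ f')'`, so the quotient `φ' f / (φ f')`
has vanishing derivative and is constant on the interval. -/

open Set

theorem Set.OrdConnected.eq_of_hasDerivAt_eq_zero {E : Type*} [NormedAddCommGroup E]
    [NormedSpace ℝ E] {s : Set ℝ} {g : ℝ → E} (hs : s.OrdConnected)
    (hg : ∀ x ∈ s, HasDerivAt g 0 x) {x y : ℝ} (hx : x ∈ s) (hy : y ∈ s) : g x = g y := by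
  wlog hxy : x ≤ y generalizing x y
  · exact (this hy hx (le_of_not_ge hxy)).symm
  have hsub : Icc x y ⊆ s := hs.out hx hy
  have hcont : ContinuousOn g (Icc x y) := fun z hz =>
    (hg z (hsub hz)).continuousAt.continuousWithinAt
  exact (constant_of_has_deriv_right_zero hcont
    (fun z hz => (hg z (hsub (Ico_subset_Icc_self hz))).hasDerivWithinAt)
    y (right_mem_Icc.mpr hxy)).symm

theorem HasDerivAt.div_eq_zero_of_wronskian_eq_zero {u v : ℝ → ℝ} {u' v' x : ℝ}
    (hu : HasDerivAt u u' x) (hv : HasDerivAt v v' x) (hvx : v x ≠ 0)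
    (hW : u' * v x - u x * v' = 0) : HasDerivAt (fun y => u y / v y) 0 x := by
  have hq := hu.div hv hvx
  rwa [hW, zero_div] at hq

theorem stmt3_general (n m : ℕ) (r : ℝ)
    (I : Set ℝ) (hIconn : I.OrdConnected)
    (f f' f'' φ φ' φ'' h h' : ℝ → ℝ)
    (hfd : ∀ ξ ∈ I, HasDerivAt f (f' ξ) ξ) (hfd2 : ∀ ξ ∈ I, HasDerivAt f' (f'' ξ) ξ)
    (hφd : ∀ ξ ∈ I, HasDerivAt φ (φ' ξ) ξ) (hφd2 : ∀ ξ ∈ I, HasDerivAt φ' (φ'' ξ) ξ)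
    (hfpos : ∀ ξ ∈ I, 0 < f ξ) (hφpos : ∀ ξ ∈ I, 0 < φ ξ) (hhpos : ∀ ξ ∈ I, 0 < h ξ)
    (hf'ne : ∀ ξ ∈ I, f' ξ ≠ 0) (hφ'ne : ∀ ξ ∈ I, φ' ξ ≠ 0)
    (heq2 : ∀ ξ ∈ I,
      f ξ * h ξ * φ ξ * φ'' ξ - (n - 1 : ℝ) * f ξ * h ξ * (φ' ξ) ^ 2
        + m * h ξ * φ ξ * φ' ξ * f' ξ + r * f ξ * φ ξ * φ' ξ * h' ξ = 0)
    (heq3 : ∀ ξ ∈ I,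
      -(f ξ) * h ξ * (φ ξ) ^ 2 * f'' ξ + (n - 2 : ℝ) * f ξ * h ξ * φ ξ * φ' ξ * f' ξ
        - (m - 1 : ℝ) * h ξ * (φ ξ) ^ 2 * (f' ξ) ^ 2
        - r * f ξ * (φ ξ) ^ 2 * f' ξ * h' ξ = 0) :
    ∃ k : ℝ, k ≠ 0 ∧ ∀ ξ ∈ I, φ' ξ * f ξ = k * φ ξ * f' ξ := by
  obtain hI | ⟨ξ₀, hξ₀⟩ := I.eq_empty_or_nonempty
  · exact ⟨1, one_ne_zero, by simp [hI]⟩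
  have hden : ∀ ξ ∈ I, φ ξ * f' ξ ≠ 0 := fun ξ hξ => mul_ne_zero (hφpos ξ hξ).ne' (hf'ne ξ hξ)
  have hwronskian : ∀ ξ ∈ I, (φ'' ξ * f ξ + φ' ξ * f' ξ) * (φ ξ * f' ξ)
      - φ' ξ * f ξ * (φ' ξ * f' ξ + φ ξ * f'' ξ) = 0 := by
    intro ξ hξ
    have hhφW : h ξ * φ ξ * ((φ'' ξ * f ξ + φ' ξ * f' ξ) * (φ ξ * f' ξ)
        - φ' ξ * f ξ * (φ' ξ * f' ξ + φ ξ * f'' ξ)) = 0 := by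
      linear_combination φ ξ * f' ξ * heq2 ξ hξ + φ' ξ * heq3 ξ hξ
    exact (mul_eq_zero.mp hhφW).resolve_left (mul_ne_zero (hhpos ξ hξ).ne' (hφpos ξ hξ).ne')
  set g : ℝ → ℝ := fun ξ => φ' ξ * f ξ / (φ ξ * f' ξ)
  have hg : ∀ ξ ∈ I, HasDerivAt g 0 ξ := fun ξ hξ =>
    ((hφd2 ξ hξ).mul (hfd ξ hξ)).div_eq_zero_of_wronskian_eq_zero
      ((hφd ξ hξ).mul (hfd2 ξ hξ)) (hden ξ hξ) (hwronskian ξ hξ)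
  refine ⟨g ξ₀, div_ne_zero (mul_ne_zero (hφ'ne ξ₀ hξ₀) (hfpos ξ₀ hξ₀).ne') (hden ξ₀ hξ₀),
    fun ξ hξ => ?_⟩
  rw [← hIconn.eq_of_hasDerivAt_eq_zero hg hξ hξ₀, mul_assoc]
  exact (div_mul_cancel₀ _ (hden ξ hξ)).symm

/-- On an open interval, positive twice differentiable solutions of the
translation-invariant quasi-Einstein system (with `ρ = 0` and Ricci-flat fiber) having
nonvanishing `f'` and `φ'` satisfy `φ'·f = k·φ·f'` for some nonzero constant `k`. -/
theorem stmt3 (n m : ℕ) (hn : 3 ≤ n) (hm : 1 ≤ m) (r : ℝ) (hr : 0 < r)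
    (I : Set ℝ) (hIopen : IsOpen I) (hIconn : I.OrdConnected)
    (f f' f'' φ φ' φ'' h h' h'' : ℝ → ℝ)
    (hfd : ∀ ξ ∈ I, HasDerivAt f (f' ξ) ξ) (hfd2 : ∀ ξ ∈ I, HasDerivAt f' (f'' ξ) ξ)
    (hφd : ∀ ξ ∈ I, HasDerivAt φ (φ' ξ) ξ) (hφd2 : ∀ ξ ∈ I, HasDerivAt φ' (φ'' ξ) ξ)
    (hhd : ∀ ξ ∈ I, HasDerivAt h (h' ξ) ξ) (hhd2 : ∀ ξ ∈ I, HasDerivAt h' (h'' ξ) ξ)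
    (hfpos : ∀ ξ ∈ I, 0 < f ξ) (hφpos : ∀ ξ ∈ I, 0 < φ ξ) (hhpos : ∀ ξ ∈ I, 0 < h ξ)
    (hf'ne : ∀ ξ ∈ I, f' ξ ≠ 0) (hφ'ne : ∀ ξ ∈ I, φ' ξ ≠ 0)
    (heq1 : ∀ ξ ∈ I,
      (n - 2 : ℝ) * f ξ * h ξ * φ'' ξ - r * f ξ * φ ξ * h'' ξ - m * h ξ * φ ξ * f'' ξ
        - 2 * m * h ξ * φ' ξ * f' ξ - 2 * r * f ξ * φ' ξ * h' ξ = 0)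
    (heq2 : ∀ ξ ∈ I,
      f ξ * h ξ * φ ξ * φ'' ξ - (n - 1 : ℝ) * f ξ * h ξ * (φ' ξ) ^ 2
        + m * h ξ * φ ξ * φ' ξ * f' ξ + r * f ξ * φ ξ * φ' ξ * h' ξ = 0)
    (heq3 : ∀ ξ ∈ I,
      -(f ξ) * h ξ * (φ ξ) ^ 2 * f'' ξ + (n - 2 : ℝ) * f ξ * h ξ * φ ξ * φ' ξ * f' ξ
        - (m - 1 : ℝ) * h ξ * (φ ξ) ^ 2 * (f' ξ) ^ 2
        - r * f ξ * (φ ξ) ^ 2 * f' ξ * h' ξ = 0) :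
    ∃ k : ℝ, k ≠ 0 ∧ ∀ ξ ∈ I, φ' ξ * f ξ = k * φ ξ * f' ξ :=
  stmt3_general n m r I hIconn f f' f'' φ φ' φ'' h h' hfd hfd2 hφd hφd2 hfpos hφpos hhpos hf'ne
    hφ'ne heq2 heq3
end

section
/- Let n ≥ 3 and m ≥ 1 be integers, r > 0, k ≠ 0, and set a := (n−2)k − m and b := m(2k+1) − (n−2)k². Let I ⊆ ℝ be an open interval and f, φ, h : I → ℝ positive twice differentiable functions satisfying φ'(ξ)f(ξ) = k·φ(ξ)f'(ξ) on I, and define x := f'/f and y := h'/h on I. Then the system (n−2)fhφ'' − rfφh'' − mhφf'' − 2mhφ'f' − 2rfφ'h' = 0, fhφφ'' − (n−1)fh(φ')² + mhφφ'f' + rfφφ'h' = 0, −fhφ²f'' + (n−2)fhφφ'f' − (m−1)hφ²(f')² − rfφ²f'h' = 0 holds on I if and only if x and y satisfy on I the first-order system x' = ax² − rxy and y' = ((a²−b)/r)x² − y² − (2k+a)xy. -/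
/-- Under the relation `φ'·f = k·φ·f'`, the translation-invariant
quasi-Einstein system (with `ρ = 0` and Ricci-flat fiber) is equivalent to the
first-order system `x' = ax² − rxy`, `y' = ((a²−b)/r)x² − y² − (2k+a)xy` for
`x = f'/f`, `y = h'/h`. -/
theorem stmt4 (n m : ℕ) (hn : 3 ≤ n) (hm : 1 ≤ m) (r k : ℝ) (hr : 0 < r) (hk : k ≠ 0)
    (a b : ℝ) (ha : a = (n - 2 : ℝ) * k - m) (hb : b = m * (2 * k + 1) - (n - 2 : ℝ) * k ^ 2)
    (I : Set ℝ) (hIopen : IsOpen I) (hIconn : I.OrdConnected)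
    (f f' f'' φ φ' φ'' h h' h'' : ℝ → ℝ)
    (hfd : ∀ ξ ∈ I, HasDerivAt f (f' ξ) ξ) (hfd2 : ∀ ξ ∈ I, HasDerivAt f' (f'' ξ) ξ)
    (hφd : ∀ ξ ∈ I, HasDerivAt φ (φ' ξ) ξ) (hφd2 : ∀ ξ ∈ I, HasDerivAt φ' (φ'' ξ) ξ)
    (hhd : ∀ ξ ∈ I, HasDerivAt h (h' ξ) ξ) (hhd2 : ∀ ξ ∈ I, HasDerivAt h' (h'' ξ) ξ)
    (hfpos : ∀ ξ ∈ I, 0 < f ξ) (hφpos : ∀ ξ ∈ I, 0 < φ ξ) (hhpos : ∀ ξ ∈ I, 0 < h ξ)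
    (hrel : ∀ ξ ∈ I, φ' ξ * f ξ = k * φ ξ * f' ξ)
    (x y : ℝ → ℝ) (hx : ∀ ξ, x ξ = f' ξ / f ξ) (hy : ∀ ξ, y ξ = h' ξ / h ξ) :
    ((∀ ξ ∈ I,
        (n - 2 : ℝ) * f ξ * h ξ * φ'' ξ - r * f ξ * φ ξ * h'' ξ - m * h ξ * φ ξ * f'' ξ
          - 2 * m * h ξ * φ' ξ * f' ξ - 2 * r * f ξ * φ' ξ * h' ξ = 0) ∧
      (∀ ξ ∈ I,
        f ξ * h ξ * φ ξ * φ'' ξ - (n - 1 : ℝ) * f ξ * h ξ * (φ' ξ) ^ 2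
          + m * h ξ * φ ξ * φ' ξ * f' ξ + r * f ξ * φ ξ * φ' ξ * h' ξ = 0) ∧
      (∀ ξ ∈ I,
        -(f ξ) * h ξ * (φ ξ) ^ 2 * f'' ξ + (n - 2 : ℝ) * f ξ * h ξ * φ ξ * φ' ξ * f' ξ
          - (m - 1 : ℝ) * h ξ * (φ ξ) ^ 2 * (f' ξ) ^ 2
          - r * f ξ * (φ ξ) ^ 2 * f' ξ * h' ξ = 0))
    ↔
    (∀ ξ ∈ I,
      HasDerivAt x (a * (x ξ) ^ 2 - r * x ξ * y ξ) ξ ∧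
      HasDerivAt y ((a ^ 2 - b) / r * (x ξ) ^ 2 - (y ξ) ^ 2 - (2 * k + a) * x ξ * y ξ) ξ) := by
  have hfx : x = fun t => f' t / f t := funext hx
  have hhy : y = fun t => h' t / h t := funext hy
  have hrne : r ≠ 0 := hr.ne'
  -- differentiated relation
  have hrel' : ∀ ξ ∈ I, φ'' ξ * f ξ + φ' ξ * f' ξ = k * (φ' ξ * f' ξ + φ ξ * f'' ξ) := by
    intro ξ hξ
    have hD : HasDerivAt (fun t => φ' t * f t - k * (φ t * f' t))
        (φ'' ξ * f ξ + φ' ξ * f' ξ - k * (φ' ξ * f' ξ + φ ξ * f'' ξ)) ξ := by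
      have h1 := (hφd2 ξ hξ).mul (hfd ξ hξ)
      have h2 := ((hφd ξ hξ).mul (hfd2 ξ hξ)).const_mul k
      exact h1.sub h2
    have hz : (fun t => φ' t * f t - k * (φ t * f' t)) =ᶠ[nhds ξ] fun _ => (0:ℝ) := by
      filter_upwards [hIopen.mem_nhds hξ] with t ht
      linear_combination hrel t ht
    have h0 : HasDerivAt (fun _ : ℝ => (0:ℝ))
        (φ'' ξ * f ξ + φ' ξ * f' ξ - k * (φ' ξ * f' ξ + φ ξ * f'' ξ)) ξ :=
      hD.congr_of_eventuallyEq hz.symm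
    have h5 := h0.unique (hasDerivAt_const ξ 0)
    linarith
  have hdx : ∀ ξ ∈ I, HasDerivAt x ((f'' ξ * f ξ - f' ξ * f' ξ) / f ξ ^ 2) ξ := by
    intro ξ hξ; rw [hfx]; exact (hfd2 ξ hξ).div (hfd ξ hξ) (hfpos ξ hξ).ne'
  have hdy : ∀ ξ ∈ I, HasDerivAt y ((h'' ξ * h ξ - h' ξ * h' ξ) / h ξ ^ 2) ξ := by
    intro ξ hξ; rw [hhy]; exact (hhd2 ξ hξ).div (hhd ξ hξ) (hhpos ξ hξ).ne'
  constructor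
  · rintro ⟨E1, E2, E3⟩ ξ hξ
    have hF := (hfpos ξ hξ).ne'
    have hP := (hφpos ξ hξ).ne'
    have hH := (hhpos ξ hξ).ne'
    have r0 := hrel ξ hξ
    have r1 := hrel' ξ hξ
    have e1 := E1 ξ hξ
    have e3 := E3 ξ hξ
    have xq : f'' ξ * f ξ * h ξ = (a + 1) * f' ξ ^ 2 * h ξ - r * f ξ * f' ξ * h' ξ := by
      have key : (φ ξ) ^ 2 * (f'' ξ * f ξ * h ξ)
          = (φ ξ) ^ 2 * ((a + 1) * f' ξ ^ 2 * h ξ - r * f ξ * f' ξ * h' ξ) := by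
        rw [ha]
        linear_combination (-1 : ℝ) * e3 + ((n - 2 : ℝ) * h ξ * φ ξ * f' ξ) * r0
      exact mul_left_cancel₀ (pow_ne_zero 2 hP) key
    have yq : r * f ξ ^ 2 * h'' ξ
        = (a ^ 2 - b) * f' ξ ^ 2 * h ξ - r * (2 * k + a) * f' ξ * f ξ * h' ξ := by
      have key : φ ξ * (r * f ξ ^ 2 * h'' ξ)
          = φ ξ * ((a ^ 2 - b) * f' ξ ^ 2 * h ξ - r * (2 * k + a) * f' ξ * f ξ * h' ξ) := by
        rw [ha] at xq ⊢
        rw [hb]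
        linear_combination (-(f ξ)) * e1 + ((n - 2 : ℝ) * f ξ * h ξ) * r1
          + ((((n - 2 : ℝ) * (k - 1) - 2 * m) * h ξ * f' ξ - 2 * r * f ξ * h' ξ)) * r0
          + (((n - 2 : ℝ) * k - m) * φ ξ) * xq
      exact mul_left_cancel₀ hP key
    constructor
    · have hval : a * x ξ ^ 2 - r * x ξ * y ξ = (f'' ξ * f ξ - f' ξ * f' ξ) / f ξ ^ 2 := by
        rw [hx, hy]
        field_simp
        linear_combination (-1 : ℝ) * xq
      rw [hval]; exact hdx ξ hξ
    · have hval : (a ^ 2 - b) / r * x ξ ^ 2 - y ξ ^ 2 - (2 * k + a) * x ξ * y ξ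
          = (h'' ξ * h ξ - h' ξ * h' ξ) / h ξ ^ 2 := by
        rw [hx, hy]
        field_simp
        linear_combination (-(h ξ)) * yq
      rw [hval]; exact hdy ξ hξ
  · intro hs
    have keyx : ∀ ξ ∈ I, f'' ξ * f ξ * h ξ = (a + 1) * f' ξ ^ 2 * h ξ - r * f ξ * f' ξ * h' ξ := by
      intro ξ hξ
      have hF := (hfpos ξ hξ).ne'
      have hH := (hhpos ξ hξ).ne'
      have e := (hdx ξ hξ).unique (hs ξ hξ).1
      rw [hx, hy] at e
      field_simp at e
      have key : f ξ ^ 3 * (f'' ξ * f ξ * h ξ)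
          = f ξ ^ 3 * ((a + 1) * f' ξ ^ 2 * h ξ - r * f ξ * f' ξ * h' ξ) := by
        linear_combination (f ξ) ^ 3 * e
      exact mul_left_cancel₀ (pow_ne_zero 3 hF) key
    have keyy : ∀ ξ ∈ I, r * f ξ ^ 2 * h'' ξ
        = (a ^ 2 - b) * f' ξ ^ 2 * h ξ - r * (2 * k + a) * f' ξ * f ξ * h' ξ := by
      intro ξ hξ
      have hF := (hfpos ξ hξ).ne'
      have hH := (hhpos ξ hξ).ne'
      have e := (hdy ξ hξ).unique (hs ξ hξ).2
      rw [hx, hy] at e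
      field_simp at e
      have key : (f ξ * h ξ ^ 4) * (r * f ξ ^ 2 * h'' ξ)
          = (f ξ * h ξ ^ 4) * ((a ^ 2 - b) * f' ξ ^ 2 * h ξ
              - r * (2 * k + a) * f' ξ * f ξ * h' ξ) := by
        linear_combination (f ξ * h ξ ^ 3) * e
      exact mul_left_cancel₀ (mul_ne_zero hF (pow_ne_zero 4 hH)) key
    refine ⟨?_, ?_, ?_⟩ <;> intro ξ hξ
    · -- E1
      have hF := (hfpos ξ hξ).ne'
      have r0 := hrel ξ hξ
      have r1 := hrel' ξ hξ
      have xq := keyx ξ hξ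
      have yq := keyy ξ hξ
      rw [ha] at xq
      rw [ha, hb] at yq
      have key : f ξ * ((n - 2 : ℝ) * f ξ * h ξ * φ'' ξ - r * f ξ * φ ξ * h'' ξ
          - m * h ξ * φ ξ * f'' ξ - 2 * m * h ξ * φ' ξ * f' ξ - 2 * r * f ξ * φ' ξ * h' ξ)
          = f ξ * 0 := by
        linear_combination (-(φ ξ)) * yq + ((n - 2 : ℝ) * f ξ * h ξ) * r1
          + ((((n - 2 : ℝ) * (k - 1) - 2 * m) * h ξ * f' ξ - 2 * r * f ξ * h' ξ)) * r0
          + (((n - 2 : ℝ) * k - m) * φ ξ) * xq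
      exact mul_left_cancel₀ hF key
    · -- E2
      have hF := (hfpos ξ hξ).ne'
      have r0 := hrel ξ hξ
      have r1 := hrel' ξ hξ
      have xq := keyx ξ hξ
      rw [ha] at xq
      have key : f ξ * (f ξ * h ξ * φ ξ * φ'' ξ - (n - 1 : ℝ) * f ξ * h ξ * (φ' ξ) ^ 2
          + m * h ξ * φ ξ * φ' ξ * f' ξ + r * f ξ * φ ξ * φ' ξ * h' ξ) = f ξ * 0 := by
        linear_combination (f ξ * h ξ * φ ξ) * r1
          + ((k - 1 + (m : ℝ)) * h ξ * φ ξ * f' ξ + r * f ξ * φ ξ * h' ξ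
              - (n - 1 : ℝ) * h ξ * (φ' ξ * f ξ + k * φ ξ * f' ξ)) * r0
          + (k * φ ξ ^ 2) * xq
      exact mul_left_cancel₀ hF key
    · -- E3
      have r0 := hrel ξ hξ
      have xq := keyx ξ hξ
      rw [ha] at xq
      linear_combination (-(φ ξ) ^ 2) * xq + ((n - 2 : ℝ) * h ξ * φ ξ * f' ξ) * r0
end

section
/- Let a, b, k ∈ ℝ, r > 0, and N ∈ ℝ. Let I ⊆ ℝ be an open interval and x : I → ℝ a differentiable function with x(ξ) ≠ 0 for all ξ ∈ I, and set y := N·x. If x and y satisfy on I the system x' = ax² − rxy and y' = ((a²−b)/r)x² − y² − (2k+a)xy, then r(r−1)N² − 2r(k+a)N + (a²−b) = 0 and x'(ξ) = (a−rN)x(ξ)² for all ξ ∈ I. -/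
/-!
Differentiating `y = N x` with the first equation gives `y' = N (a - r N) x²`; comparing with the
second equation at any point where `x ≠ 0` and dividing by `x²` leaves the quadratic for `N`.
-/

lemma quadratic_eq_zero_of_proportional {a b k r N x₀ : ℝ} (hr : r ≠ 0) (hx₀ : x₀ ≠ 0)
    (h : (a ^ 2 - b) / r * x₀ ^ 2 - (N * x₀) ^ 2 - (2 * k + a) * x₀ * (N * x₀) =
      N * (a * x₀ ^ 2 - r * x₀ * (N * x₀))) :
    r * (r - 1) * N ^ 2 - 2 * r * (k + a) * N + (a ^ 2 - b) = 0 := by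
  field_simp at h
  linear_combination h

theorem stmt5_general (a b k r N : ℝ) (hr : 0 < r)
    (I : Set ℝ) (hIne : I.Nonempty)
    (x y : ℝ → ℝ) (hy : ∀ ξ, y ξ = N * x ξ)
    (hxne : ∀ ξ ∈ I, x ξ ≠ 0)
    (hx' : ∀ ξ ∈ I, HasDerivAt x (a * (x ξ) ^ 2 - r * x ξ * y ξ) ξ)
    (hy' : ∀ ξ ∈ I, HasDerivAt y
      ((a ^ 2 - b) / r * (x ξ) ^ 2 - (y ξ) ^ 2 - (2 * k + a) * x ξ * y ξ) ξ) :
    r * (r - 1) * N ^ 2 - 2 * r * (k + a) * N + (a ^ 2 - b) = 0 ∧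
    ∀ ξ ∈ I, HasDerivAt x ((a - r * N) * (x ξ) ^ 2) ξ := by
  obtain ⟨ξ₀, hξ₀⟩ := hIne
  have hy_eq : y = fun ξ => N * x ξ := funext hy
  have hy'_prop : HasDerivAt y (N * (a * x ξ₀ ^ 2 - r * x ξ₀ * y ξ₀)) ξ₀ :=
    hy_eq ▸ (hx' ξ₀ hξ₀).const_mul N
  have hcompare := (hy' ξ₀ hξ₀).unique hy'_prop
  rw [hy ξ₀] at hcompare
  refine ⟨quadratic_eq_zero_of_proportional hr.ne' (hxne ξ₀ hξ₀) hcompare, fun ξ hξ => ?_⟩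
  convert hx' ξ hξ using 1
  rw [hy ξ]
  ring

/-- If a nowhere-vanishing solution of the first-order system has
`y = N·x`, then `N` satisfies the quadratic `r(r−1)N² − 2r(k+a)N + (a²−b) = 0` and
`x' = (a − rN)x²`. -/
theorem stmt5 (a b k r N : ℝ) (hr : 0 < r)
    (I : Set ℝ) (hIopen : IsOpen I) (hIconn : I.OrdConnected) (hIne : I.Nonempty)
    (x y : ℝ → ℝ) (hy : ∀ ξ, y ξ = N * x ξ)
    (hxne : ∀ ξ ∈ I, x ξ ≠ 0)
    (hx' : ∀ ξ ∈ I, HasDerivAt x (a * (x ξ) ^ 2 - r * x ξ * y ξ) ξ)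
    (hy' : ∀ ξ ∈ I, HasDerivAt y
      ((a ^ 2 - b) / r * (x ξ) ^ 2 - (y ξ) ^ 2 - (2 * k + a) * x ξ * y ξ) ξ) :
    r * (r - 1) * N ^ 2 - 2 * r * (k + a) * N + (a ^ 2 - b) = 0 ∧
    ∀ ξ ∈ I, HasDerivAt x ((a - r * N) * (x ξ) ^ 2) ξ :=
  stmt5_general a b k r N hr I hIne x y hy hxne hx' hy'
end

section
/- Let n ≥ 3 and m ≥ 1 be integers, k > 0, r > 0 with r ≠ 1, and set a := (n−2)k − m and b := m(2k+1) − (n−2)k². Assume r(k+a)² ≥ (r−1)(a²−b), let N := (r(k+a) ± √(r²(k+a)² − r(r−1)(a²−b)))/(r(r−1)) (either choice of sign), and assume a − rN ≠ 0. Let c ∈ ℝ and c₁, c₂, c₃ > 0, and on the half-line I := {ξ ∈ ℝ : (a−rN)ξ + c > 0} define f(ξ) := c₁((a−rN)ξ+c)^{−1/(a−rN)}, h(ξ) := c₂((a−rN)ξ+c)^{−N/(a−rN)}, and φ(ξ) := c₃((a−rN)ξ+c)^{−k/(a−rN)}. Then on I the following three equations hold: (n−2)fhφ'' − rfφh'' −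 mhφf'' − 2mhφ'f' − 2rfφ'h' = 0; fhφφ'' − (n−1)fh(φ')² + mhφφ'f' + rfφφ'h' = 0; and −fhφ²f'' + (n−2)fhφφ'f' − (m−1)hφ²(f')² − rfφ²f'h' = 0. -/
/-!
With `u = (a - rN)ξ + c`, each of `f, h, φ` is a constant times a power of `u`, so its first and
second derivatives are `-p F/u` and `p(p + a - rN) F/u²` for the exponent parameter `p = 1, N, k`.
Multiplying by `u²`, each equation reduces to a polynomial identity between `k`, `N` and `a - rN`:
the second and third are linear and follow from the definition of `a`, while the first is the
quadratic `r(r-1)N² - 2r(k+a)N + a² - b = 0`, of which `N` is a root by the quadratic formula.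
-/

section AffineRpow

variable {A c C q ξ : ℝ}

theorem hasDerivAt_const_mul_affine_rpow (hξ : 0 < A * ξ + c) :
    HasDerivAt (fun x => C * (A * x + c) ^ q) (C * q * A * (A * ξ + c) ^ (q - 1)) ξ := by
  have hlin : HasDerivAt (fun x : ℝ => A * x + c) A ξ := by
    simpa using ((hasDerivAt_id ξ).const_mul A).add_const c
  exact ((hlin.rpow_const (Or.inl hξ.ne')).const_mul C).congr_deriv (by ring)

theorem deriv_const_mul_affine_rpow (hξ : 0 < A * ξ + c) :
    deriv (fun x => C * (A * x + c) ^ q) ξ = C * q * A * (A * ξ + c) ^ (q - 1) :=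
  hasDerivAt_const_mul_affine_rpow hξ |>.deriv

theorem deriv_deriv_const_mul_affine_rpow (hξ : 0 < A * ξ + c) :
    deriv (deriv fun x => C * (A * x + c) ^ q) ξ
      = C * q * (q - 1) * A ^ 2 * (A * ξ + c) ^ (q - 2) := by
  have hnhds : ∀ᶠ x in nhds ξ, 0 < A * x + c :=
    continuousAt_const.eventually_lt (by fun_prop) hξ
  have hderiv : deriv (fun x => C * (A * x + c) ^ q)
      =ᶠ[nhds ξ] fun x => (C * q * A) * (A * x + c) ^ (q - 1) := by
    filter_upwards [hnhds] with x hx using deriv_const_mul_affine_rpow hx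
  rw [hderiv.deriv_eq, deriv_const_mul_affine_rpow hξ, sub_sub, one_add_one_eq_two]
  ring

theorem deriv_and_deriv_deriv_of_affine_rpow {p : ℝ} {F : ℝ → ℝ} (hA : A ≠ 0)
    (hF : ∀ x, F x = C * (A * x + c) ^ (-(p / A))) (hξ : 0 < A * ξ + c) :
    deriv F ξ = -p * F ξ / (A * ξ + c) ∧
      deriv (deriv F) ξ = p * (p + A) * F ξ / (A * ξ + c) ^ 2 := by
  obtain rfl : F = fun x => C * (A * x + c) ^ (-(p / A)) := funext hF
  rw [deriv_const_mul_affine_rpow hξ, deriv_deriv_const_mul_affine_rpow hξ,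
    Real.rpow_sub hξ, Real.rpow_sub hξ, Real.rpow_one, Real.rpow_two]
  exact ⟨by field_simp, by field_simp; ring⟩

end AffineRpow

theorem mul_sq_sub_two_mul_add_eq_zero_of_eq_div {α B C s x : ℝ} (hα : α ≠ 0)
    (hD : 0 ≤ B ^ 2 - α * C) (hs : s = 1 ∨ s = -1)
    (hx : x = (B + s * √(B ^ 2 - α * C)) / α) :
    α * x ^ 2 - 2 * B * x + C = 0 := by
  have hαx : α * x - B = s * √(B ^ 2 - α * C) := by
    rw [hx]; field_simp; ring
  have hs2 : s ^ 2 = 1 := by rcases hs with rfl | rfl <;> norm_num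
  have hsq := Real.sq_sqrt hD
  have : α * (α * x ^ 2 - 2 * B * x + C) = 0 := by
    linear_combination (α * x - B + s * √(B ^ 2 - α * C)) * hαx
      + √(B ^ 2 - α * C) ^ 2 * hs2 + hsq
  exact (mul_eq_zero.mp this).resolve_left hα

theorem stmt6_general (n m : ℕ) (k r : ℝ) (hr : 0 < r)
    (hr1 : r ≠ 1)
    (a b : ℝ) (ha : a = (n - 2 : ℝ) * k - m) (hb : b = m * (2 * k + 1) - (n - 2 : ℝ) * k ^ 2)
    (hdisc : (r - 1) * (a ^ 2 - b) ≤ r * (k + a) ^ 2)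
    (s : ℝ) (hs : s = 1 ∨ s = -1)
    (N : ℝ) (hN : N = (r * (k + a)
        + s * Real.sqrt (r ^ 2 * (k + a) ^ 2 - r * (r - 1) * (a ^ 2 - b))) / (r * (r - 1)))
    (hane : a - r * N ≠ 0)
    (c c₁ c₂ c₃ : ℝ)
    (f h φ : ℝ → ℝ)
    (hf : ∀ ξ, f ξ = c₁ * ((a - r * N) * ξ + c) ^ (-(1 / (a - r * N))))
    (hh : ∀ ξ, h ξ = c₂ * ((a - r * N) * ξ + c) ^ (-(N / (a - r * N))))
    (hφ : ∀ ξ, φ ξ = c₃ * ((a - r * N) * ξ + c) ^ (-(k / (a - r * N)))) :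
    ∀ ξ : ℝ, 0 < (a - r * N) * ξ + c →
      ((n - 2 : ℝ) * f ξ * h ξ * deriv (deriv φ) ξ - r * f ξ * φ ξ * deriv (deriv h) ξ
        - m * h ξ * φ ξ * deriv (deriv f) ξ - 2 * m * h ξ * deriv φ ξ * deriv f ξ
        - 2 * r * f ξ * deriv φ ξ * deriv h ξ = 0) ∧
      (f ξ * h ξ * φ ξ * deriv (deriv φ) ξ - (n - 1 : ℝ) * f ξ * h ξ * (deriv φ ξ) ^ 2
        + m * h ξ * φ ξ * deriv φ ξ * deriv f ξ + r * f ξ * φ ξ * deriv φ ξ * deriv h ξ = 0) ∧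
      (-(f ξ) * h ξ * (φ ξ) ^ 2 * deriv (deriv f) ξ
        + (n - 2 : ℝ) * f ξ * h ξ * φ ξ * deriv φ ξ * deriv f ξ
        - (m - 1 : ℝ) * h ξ * (φ ξ) ^ 2 * (deriv f ξ) ^ 2
        - r * f ξ * (φ ξ) ^ 2 * deriv f ξ * deriv h ξ = 0) := by
  intro ξ hξ
  have hquad : r * (r - 1) * N ^ 2 - 2 * (r * (k + a)) * N + (a ^ 2 - b) = 0 := by
    refine mul_sq_sub_two_mul_add_eq_zero_of_eq_div
      (mul_ne_zero hr.ne' (sub_ne_zero.2 hr1)) ?_ hs (by rw [hN, mul_pow])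
    nlinarith [mul_nonneg hr.le (sub_nonneg.2 hdisc)]
  obtain ⟨f₁, f₂⟩ := deriv_and_deriv_deriv_of_affine_rpow hane hf hξ
  obtain ⟨h₁, h₂⟩ := deriv_and_deriv_deriv_of_affine_rpow hane hh hξ
  obtain ⟨φ₁, φ₂⟩ := deriv_and_deriv_deriv_of_affine_rpow hane hφ hξ
  rw [f₁, f₂, h₁, h₂, φ₁, φ₂]
  -- an opaque `u` keeps `ring` from expanding it inside `u⁻¹`
  generalize (a - r * N) * ξ + c = u
  refine ⟨?_, ?_, ?_⟩
  · linear_combination (f ξ * h ξ * φ ξ / u ^ 2) * (hquad + hb - (a - r * N) * ha)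
  · linear_combination (k * f ξ * h ξ * φ ξ ^ 2 / u ^ 2) * ha
  · linear_combination (-(f ξ ^ 2 * h ξ * φ ξ ^ 2 / u ^ 2)) * ha

/-- For `r ≠ 1` and `N` a root of the quadratic (either sign of the
square root), the explicit power-law functions `f, h, φ` solve the three
translation-invariant quasi-Einstein equations (ρ = 0, Ricci-flat fiber) on the
half-line where `(a−rN)ξ + c > 0`. -/
theorem stmt6 (n m : ℕ) (hn : 3 ≤ n) (hm : 1 ≤ m) (k r : ℝ) (hk : 0 < k) (hr : 0 < r)
    (hr1 : r ≠ 1)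
    (a b : ℝ) (ha : a = (n - 2 : ℝ) * k - m) (hb : b = m * (2 * k + 1) - (n - 2 : ℝ) * k ^ 2)
    (hdisc : (r - 1) * (a ^ 2 - b) ≤ r * (k + a) ^ 2)
    (s : ℝ) (hs : s = 1 ∨ s = -1)
    (N : ℝ) (hN : N = (r * (k + a)
        + s * Real.sqrt (r ^ 2 * (k + a) ^ 2 - r * (r - 1) * (a ^ 2 - b))) / (r * (r - 1)))
    (hane : a - r * N ≠ 0)
    (c c₁ c₂ c₃ : ℝ) (hc₁ : 0 < c₁) (hc₂ : 0 < c₂) (hc₃ : 0 < c₃)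
    (f h φ : ℝ → ℝ)
    (hf : ∀ ξ, f ξ = c₁ * ((a - r * N) * ξ + c) ^ (-(1 / (a - r * N))))
    (hh : ∀ ξ, h ξ = c₂ * ((a - r * N) * ξ + c) ^ (-(N / (a - r * N))))
    (hφ : ∀ ξ, φ ξ = c₃ * ((a - r * N) * ξ + c) ^ (-(k / (a - r * N)))) :
    ∀ ξ : ℝ, 0 < (a - r * N) * ξ + c →
      ((n - 2 : ℝ) * f ξ * h ξ * deriv (deriv φ) ξ - r * f ξ * φ ξ * deriv (deriv h) ξ
        - m * h ξ * φ ξ * deriv (deriv f) ξ - 2 * m * h ξ * deriv φ ξ * deriv f ξ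
        - 2 * r * f ξ * deriv φ ξ * deriv h ξ = 0) ∧
      (f ξ * h ξ * φ ξ * deriv (deriv φ) ξ - (n - 1 : ℝ) * f ξ * h ξ * (deriv φ ξ) ^ 2
        + m * h ξ * φ ξ * deriv φ ξ * deriv f ξ + r * f ξ * φ ξ * deriv φ ξ * deriv h ξ = 0) ∧
      (-(f ξ) * h ξ * (φ ξ) ^ 2 * deriv (deriv f) ξ
        + (n - 2 : ℝ) * f ξ * h ξ * φ ξ * deriv φ ξ * deriv f ξ
        - (m - 1 : ℝ) * h ξ * (φ ξ) ^ 2 * (deriv f ξ) ^ 2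
        - r * f ξ * (φ ξ) ^ 2 * deriv f ξ * deriv h ξ = 0) :=
  stmt6_general n m k r hr hr1 a b ha hb hdisc s hs N hN hane c c₁ c₂ c₃ f h φ hf hh hφ
end

section
/- Let n ≥ 3 and m ≥ 1 be integers, k > 0, and set a := (n−2)k − m and b := m(2k+1) − (n−2)k². Assume k + a ≠ 0, let N := (a²−b)/(2(k+a)), and assume a − N ≠ 0. Let c ∈ ℝ and c₁, c₂, c₃ > 0, and on the half-line I := {ξ ∈ ℝ : (a−N)ξ + c > 0} define f(ξ) := c₁((a−N)ξ+c)^{−1/(a−N)}, h(ξ) := c₂((a−N)ξ+c)^{−N/(a−N)}, and φ(ξ) := c₃((a−N)ξ+c)^{−k/(a−N)}. Then on I the following three equations hold: (n−2)fhφ'' − fφh'' − mhφf'' − 2mhφ'f' − 2fφ'h' = 0; fhφφ'' − (n−1)fh(φ')² + mhφφ'f' + fφφ'h' = 0; and −fhφ²f'' + (n−2)fhφφ'f' − (m−1)hφ²(f')² − fφ²f'h' = 0. -/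
/-! Each of `f`, `h`, `φ` has the form `g = C x ^ (-q / d)` with `x = d ξ + c` affine and
`d = a - N`, so `g' = -q g / x` and `g'' = q (q + d) g / x²`. Each equation therefore becomes a
product of the unknowns divided by `x²`, times a polynomial in `k`, `N`, `m`, `n`. The second and
third polynomials vanish by the definition of `a` alone; the first one is where `b` and
`N (2 (k + a)) = a² - b` enter. -/

lemma hasDerivAt_const_mul_rpow_affine (C d c p : ℝ) {ξ : ℝ} (hξ : 0 < d * ξ + c) :
    HasDerivAt (fun t => C * (d * t + c) ^ p) (C * p * d * (d * ξ + c) ^ (p - 1)) ξ := by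
  have h_affine : HasDerivAt (fun t : ℝ => d * t + c) d ξ := by
    simpa using ((hasDerivAt_id ξ).const_mul d).add_const c
  refine (((Real.hasDerivAt_rpow_const (p := p) (Or.inl hξ.ne')).comp ξ h_affine).const_mul
    C).congr_deriv ?_
  ring

lemma deriv_deriv_const_mul_rpow_affine (C d c p : ℝ) {ξ : ℝ} (hξ : 0 < d * ξ + c) :
    deriv (deriv fun t => C * (d * t + c) ^ p) ξ
      = C * p * (p - 1) * d ^ 2 * (d * ξ + c) ^ (p - 2) := by
  have h_open : IsOpen {t : ℝ | 0 < d * t + c} := isOpen_lt continuous_const (by fun_prop)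
  have h_deriv : deriv (fun t => C * (d * t + c) ^ p)
      =ᶠ[nhds ξ] fun t => C * p * d * (d * t + c) ^ (p - 1) :=
    Filter.eventuallyEq_of_mem (h_open.mem_nhds hξ) fun t ht =>
      (hasDerivAt_const_mul_rpow_affine C d c p ht).deriv
  rw [h_deriv.deriv_eq, (hasDerivAt_const_mul_rpow_affine _ d c (p - 1) hξ).deriv, sub_sub,
    one_add_one_eq_two]
  ring

lemma deriv_eq_and_deriv_deriv_eq_of_rpow_neg_div {g : ℝ → ℝ} {C d c q ξ : ℝ} (hd : d ≠ 0)
    (hg : ∀ t, g t = C * (d * t + c) ^ (-(q / d))) (hξ : 0 < d * ξ + c) :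
    deriv g ξ = -q * g ξ / (d * ξ + c) ∧
      deriv (deriv g) ξ = q * (q + d) * g ξ / (d * ξ + c) ^ 2 := by
  obtain rfl : g = fun t => C * (d * t + c) ^ (-(q / d)) := funext hg
  have hx := hξ.ne'
  simp only [(hasDerivAt_const_mul_rpow_affine C d c _ hξ).deriv,
    deriv_deriv_const_mul_rpow_affine C d c _ hξ, Real.rpow_sub hξ, Real.rpow_one,
    Real.rpow_two]
  constructor
  · field_simp
  · field_simp
    ring

theorem stmt7_general (n m : ℕ) (k : ℝ)
    (a b : ℝ) (ha : a = (n - 2 : ℝ) * k - m) (hb : b = m * (2 * k + 1) - (n - 2 : ℝ) * k ^ 2)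
    (hka : k + a ≠ 0)
    (N : ℝ) (hN : N = (a ^ 2 - b) / (2 * (k + a)))
    (hane : a - N ≠ 0)
    (c c₁ c₂ c₃ : ℝ)
    (f h φ : ℝ → ℝ)
    (hf : ∀ ξ, f ξ = c₁ * ((a - N) * ξ + c) ^ (-(1 / (a - N))))
    (hh : ∀ ξ, h ξ = c₂ * ((a - N) * ξ + c) ^ (-(N / (a - N))))
    (hφ : ∀ ξ, φ ξ = c₃ * ((a - N) * ξ + c) ^ (-(k / (a - N)))) :
    ∀ ξ : ℝ, 0 < (a - N) * ξ + c →
      ((n - 2 : ℝ) * f ξ * h ξ * deriv (deriv φ) ξ - f ξ * φ ξ * deriv (deriv h) ξ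
        - m * h ξ * φ ξ * deriv (deriv f) ξ - 2 * m * h ξ * deriv φ ξ * deriv f ξ
        - 2 * f ξ * deriv φ ξ * deriv h ξ = 0) ∧
      (f ξ * h ξ * φ ξ * deriv (deriv φ) ξ - (n - 1 : ℝ) * f ξ * h ξ * (deriv φ ξ) ^ 2
        + m * h ξ * φ ξ * deriv φ ξ * deriv f ξ + f ξ * φ ξ * deriv φ ξ * deriv h ξ = 0) ∧
      (-(f ξ) * h ξ * (φ ξ) ^ 2 * deriv (deriv f) ξ
        + (n - 2 : ℝ) * f ξ * h ξ * φ ξ * deriv φ ξ * deriv f ξ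
        - (m - 1 : ℝ) * h ξ * (φ ξ) ^ 2 * (deriv f ξ) ^ 2
        - f ξ * (φ ξ) ^ 2 * deriv f ξ * deriv h ξ = 0) := by
  intro ξ hξ
  obtain ⟨df, ddf⟩ := deriv_eq_and_deriv_deriv_eq_of_rpow_neg_div hane hf hξ
  obtain ⟨dh, ddh⟩ := deriv_eq_and_deriv_deriv_eq_of_rpow_neg_div hane hh hξ
  obtain ⟨dφ, ddφ⟩ := deriv_eq_and_deriv_deriv_eq_of_rpow_neg_div hane hφ hξ
  rw [df, ddf, dh, ddh, dφ, ddφ]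
  generalize (a - N) * ξ + c = x
  have hN' : N * (2 * (k + a)) = a ^ 2 - b :=
    hN ▸ div_mul_cancel₀ _ (mul_ne_zero two_ne_zero hka)
  refine ⟨?_, ?_, ?_⟩
  · linear_combination (f ξ * h ξ * φ ξ / x ^ 2) * ((N - a) * ha + hb - hN')
  · linear_combination (f ξ * h ξ * φ ξ ^ 2 * k / x ^ 2) * ha
  · linear_combination (-(f ξ ^ 2 * h ξ * φ ξ ^ 2) / x ^ 2) * ha

/-- The case `r = 1`: with `N = (a²−b)/(2(k+a))`, the explicit
power-law functions `f, h, φ` solve the three translation-invariant quasi-Einstein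
equations (ρ = 0, Ricci-flat fiber, r = 1) on the half-line where `(a−N)ξ + c > 0`. -/
theorem stmt7 (n m : ℕ) (hn : 3 ≤ n) (hm : 1 ≤ m) (k : ℝ) (hk : 0 < k)
    (a b : ℝ) (ha : a = (n - 2 : ℝ) * k - m) (hb : b = m * (2 * k + 1) - (n - 2 : ℝ) * k ^ 2)
    (hka : k + a ≠ 0)
    (N : ℝ) (hN : N = (a ^ 2 - b) / (2 * (k + a)))
    (hane : a - N ≠ 0)
    (c c₁ c₂ c₃ : ℝ) (hc₁ : 0 < c₁) (hc₂ : 0 < c₂) (hc₃ : 0 < c₃)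
    (f h φ : ℝ → ℝ)
    (hf : ∀ ξ, f ξ = c₁ * ((a - N) * ξ + c) ^ (-(1 / (a - N))))
    (hh : ∀ ξ, h ξ = c₂ * ((a - N) * ξ + c) ^ (-(N / (a - N))))
    (hφ : ∀ ξ, φ ξ = c₃ * ((a - N) * ξ + c) ^ (-(k / (a - N)))) :
    ∀ ξ : ℝ, 0 < (a - N) * ξ + c →
      ((n - 2 : ℝ) * f ξ * h ξ * deriv (deriv φ) ξ - f ξ * φ ξ * deriv (deriv h) ξ
        - m * h ξ * φ ξ * deriv (deriv f) ξ - 2 * m * h ξ * deriv φ ξ * deriv f ξ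
        - 2 * f ξ * deriv φ ξ * deriv h ξ = 0) ∧
      (f ξ * h ξ * φ ξ * deriv (deriv φ) ξ - (n - 1 : ℝ) * f ξ * h ξ * (deriv φ ξ) ^ 2
        + m * h ξ * φ ξ * deriv φ ξ * deriv f ξ + f ξ * φ ξ * deriv φ ξ * deriv h ξ = 0) ∧
      (-(f ξ) * h ξ * (φ ξ) ^ 2 * deriv (deriv f) ξ
        + (n - 2 : ℝ) * f ξ * h ξ * φ ξ * deriv φ ξ * deriv f ξ
        - (m - 1 : ℝ) * h ξ * (φ ξ) ^ 2 * (deriv f ξ) ^ 2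
        - f ξ * (φ ξ) ^ 2 * deriv f ξ * deriv h ξ = 0) :=
  stmt7_general n m k a b ha hb hka N hN hane c c₁ c₂ c₃ f h φ hf hh hφ
end

section
/- Let n ≥ 3 and m ≥ 1 be integers, r > 0, A, B ∈ ℝ, and suppose C := r²B² + r((n−2)B² − mA² − 2mAB) ≥ 0. Let k₁, k₂ > 0 and c₁, c₂ ∈ ℝ, and define f(ξ) := k₁e^{Aξ}, φ(ξ) := k₂e^{Bξ}, and h(ξ) := c₁e^{((−rB+√C)/r)ξ} + c₂e^{((−rB−√C)/r)ξ}. Then for every ξ ∈ ℝ: −r f(ξ)φ(ξ)h''(ξ) − 2r f(ξ)φ'(ξ)h'(ξ) + [(n−2)f(ξ)φ''(ξ) − mφ(ξ)f''(ξ) − 2mφ'(ξ)f'(ξ)]·h(ξ) = 0. -/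
/-! With `f, φ` exponential, the coefficient of `h` is `D f φ` with
`D = (n−2)B² − mA² − 2mAB`, so on a mode `h = e^{μξ}` the left-hand side is
`−f φ e^{μξ} (rμ² + 2rBμ − D)`. The two exponents of `h` are exactly the roots of
`rμ² + 2rBμ = D`, whose discriminant (divided by 4) is `C`. -/

open Real

theorem deriv_const_mul_exp_mul (c a : ℝ) :
    deriv (fun x => c * exp (a * x)) = fun x => c * a * exp (a * x) := by
  funext x
  have hexp : HasDerivAt (fun x => exp (a * x)) (exp (a * x) * a) x :=
    (hasDerivAt_const_mul a).exp
  rw [(hexp.const_mul c).deriv, mul_assoc, mul_comm (exp _), ← mul_assoc]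

theorem deriv_const_mul_exp_mul_add (c₁ a₁ c₂ a₂ : ℝ) :
    deriv (fun x => c₁ * exp (a₁ * x) + c₂ * exp (a₂ * x)) =
      fun x => c₁ * a₁ * exp (a₁ * x) + c₂ * a₂ * exp (a₂ * x) := by
  funext x
  rw [deriv_fun_add (by fun_prop) (by fun_prop), deriv_const_mul_exp_mul, deriv_const_mul_exp_mul]

theorem quadratic_root_of_sq_eq_discrim {r B D s μ : ℝ} (hr : r ≠ 0)
    (hs : s ^ 2 = r ^ 2 * B ^ 2 + r * D) (hμ : μ = (-r * B + s) / r) :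
    r * μ ^ 2 + 2 * r * B * μ = D := by
  subst hμ
  field_simp
  linear_combination hs

theorem stmt11_general (n m : ℕ) (r A B : ℝ) (hr : 0 < r)
    (C : ℝ) (hC : C = r ^ 2 * B ^ 2 + r * ((n - 2 : ℝ) * B ^ 2 - m * A ^ 2 - 2 * m * A * B))
    (hCnonneg : 0 ≤ C)
    (k₁ k₂ : ℝ) (c₁ c₂ : ℝ)
    (f φ h : ℝ → ℝ)
    (hf : ∀ ξ, f ξ = k₁ * Real.exp (A * ξ))
    (hφ : ∀ ξ, φ ξ = k₂ * Real.exp (B * ξ))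
    (hh : ∀ ξ, h ξ = c₁ * Real.exp (((-r * B + Real.sqrt C) / r) * ξ)
                   + c₂ * Real.exp (((-r * B - Real.sqrt C) / r) * ξ)) :
    ∀ ξ : ℝ,
      -r * f ξ * φ ξ * deriv (deriv h) ξ - 2 * r * f ξ * deriv φ ξ * deriv h ξ
        + ((n - 2 : ℝ) * f ξ * deriv (deriv φ) ξ - m * φ ξ * deriv (deriv f) ξ
            - 2 * m * deriv φ ξ * deriv f ξ) * h ξ = 0 := by
  intro ξ
  set D := (n - 2 : ℝ) * B ^ 2 - m * A ^ 2 - 2 * m * A * B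
  set μ₁ := (-r * B + √C) / r
  set μ₂ := (-r * B - √C) / r
  have hμ₁ : r * μ₁ ^ 2 + 2 * r * B * μ₁ = D :=
    quadratic_root_of_sq_eq_discrim hr.ne' (by rw [sq_sqrt hCnonneg, hC]) rfl
  have hμ₂ : r * μ₂ ^ 2 + 2 * r * B * μ₂ = D :=
    quadratic_root_of_sq_eq_discrim hr.ne' (by rw [neg_sq, sq_sqrt hCnonneg, hC]) (by ring)
  rw [funext hf, funext hφ, funext hh]
  simp only [deriv_const_mul_exp_mul, deriv_const_mul_exp_mul_add]
  linear_combination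
    -(k₁ * exp (A * ξ) * (k₂ * exp (B * ξ))) *
      (c₁ * exp (μ₁ * ξ) * hμ₁ + c₂ * exp (μ₂ * ξ) * hμ₂)

/-- For `f = k₁e^{Aξ}`, `φ = k₂e^{Bξ}` and
`h = c₁e^{((−rB+√C)/r)ξ} + c₂e^{((−rB−√C)/r)ξ}` with
`C = r²B² + r((n−2)B² − mA² − 2mAB) ≥ 0`, the linear ODE
`−rfφh'' − 2rfφ'h' + [(n−2)fφ'' − mφf'' − 2mφ'f']h = 0` holds on all of `ℝ`. -/
theorem stmt11 (n m : ℕ) (hn : 3 ≤ n) (hm : 1 ≤ m) (r A B : ℝ) (hr : 0 < r)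
    (C : ℝ) (hC : C = r ^ 2 * B ^ 2 + r * ((n - 2 : ℝ) * B ^ 2 - m * A ^ 2 - 2 * m * A * B))
    (hCnonneg : 0 ≤ C)
    (k₁ k₂ : ℝ) (hk₁ : 0 < k₁) (hk₂ : 0 < k₂) (c₁ c₂ : ℝ)
    (f φ h : ℝ → ℝ)
    (hf : ∀ ξ, f ξ = k₁ * Real.exp (A * ξ))
    (hφ : ∀ ξ, φ ξ = k₂ * Real.exp (B * ξ))
    (hh : ∀ ξ, h ξ = c₁ * Real.exp (((-r * B + Real.sqrt C) / r) * ξ)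
                   + c₂ * Real.exp (((-r * B - Real.sqrt C) / r) * ξ)) :
    ∀ ξ : ℝ,
      -r * f ξ * φ ξ * deriv (deriv h) ξ - 2 * r * f ξ * deriv φ ξ * deriv h ξ
        + ((n - 2 : ℝ) * f ξ * deriv (deriv φ) ξ - m * φ ξ * deriv (deriv f) ξ
            - 2 * m * deriv φ ξ * deriv f ξ) * h ξ = 0 :=
  stmt11_general n m r A B hr C hC hCnonneg k₁ k₂ c₁ c₂ f φ h hf hφ hh
end
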